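/- Inversion of permutation matrices: with M(π) as defined, M(π⁻¹) = M(π)⁻¹ for every permutation π of {1,…,n}. -/

import Mathlib

/-! Column `j` of `M(π)` is `e_{<π̃(j+1)} - e_{<π̃(j)}`, where `e_{<t}` is the indicator vector of
`{i | i < t}`. By telescoping, `M(π) e_{<t} = e_{<π̃(t)}`; hence `M(π⁻¹)` sends column `k` of `M(π)`
to `e_{<k+1} - e_{<k} = e_k`, that is, `M(π⁻¹) M(π) = 1`. -/

/-- The extension `π̃` of a permutation `π` of `{1,…,n}` to `{0,1,…,n+1}` fixing `0`
and `n+1`. -/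
def permExt (n : ℕ) (π : Equiv.Perm (Fin n)) : ℕ → ℕ := fun k =>
  if h : 1 ≤ k ∧ k ≤ n then (π ⟨k - 1, by omega⟩).val + 1 else k

/-- The `(n+1) × (n+1)` matrix `M(π)`:
`M_{ij} = 1` if `π̃(j−1) < i ≤ π̃(j)`, `M_{ij} = −1` if `π̃(j) < i ≤ π̃(j−1)`, else `0`. -/
def permMatrix (n : ℕ) (π : Equiv.Perm (Fin n)) :
    Matrix (Fin (n + 1)) (Fin (n + 1)) ℤ := fun i j =>
  if permExt n π j.val < i.val + 1 ∧ i.val + 1 ≤ permExt n π (j.val + 1) then 1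
  else if permExt n π (j.val + 1) < i.val + 1 ∧ i.val + 1 ≤ permExt n π j.val then -1
  else 0

open Finset
open scoped Matrix

lemma Fin.sum_sub_mul_ite_lt {N t : ℕ} (a : ℕ → ℤ) (ht : t ≤ N) :
    ∑ j : Fin N, (a (j + 1) - a j) * (if (j : ℕ) < t then 1 else 0) = a t - a 0 := by
  have hfilter : (range N).filter (· < t) = range t := by
    ext j; simp only [mem_filter, mem_range]; omega
  rw [Fin.sum_univ_eq_sum_range (fun j => (a (j + 1) - a j) * (if j < t then 1 else 0)) N]
  simp only [mul_ite, mul_one, mul_zero]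
  rw [← sum_filter, hfilter, sum_range_sub]

lemma permExt_zero (n : ℕ) (π : Equiv.Perm (Fin n)) : permExt n π 0 = 0 := by
  simp [permExt]

lemma permExt_le (n : ℕ) (π : Equiv.Perm (Fin n)) {k : ℕ} (hk : k ≤ n + 1) :
    permExt n π k ≤ n + 1 := by
  unfold permExt
  split_ifs
  · exact Nat.succ_le_succ (π _).isLt.le
  · exact hk

lemma permExt_inv_permExt (n : ℕ) (π : Equiv.Perm (Fin n)) (k : ℕ) :
    permExt n π⁻¹ (permExt n π k) = k := by
  unfold permExt
  by_cases hk : 1 ≤ k ∧ k ≤ n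
  · have hlt := (π ⟨k - 1, by omega⟩).isLt
    rw [dif_pos hk, dif_pos ⟨by omega, by omega⟩]
    simp only [add_tsub_cancel_right, Fin.eta, Equiv.Perm.inv_def, Equiv.symm_apply_apply]
    omega
  · rw [dif_neg hk, dif_neg hk]

def ltIndicator (n t : ℕ) : Fin (n + 1) → ℤ := fun i => if (i : ℕ) < t then 1 else 0

lemma permMatrix_apply (n : ℕ) (π : Equiv.Perm (Fin n)) (i j : Fin (n + 1)) :
    permMatrix n π i j =
      ltIndicator n (permExt n π (j + 1)) i - ltIndicator n (permExt n π j) i := by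
  unfold permMatrix ltIndicator
  split_ifs <;> omega

lemma permMatrix_mulVec_ltIndicator (n : ℕ) (π : Equiv.Perm (Fin n)) {t : ℕ} (ht : t ≤ n + 1) :
    permMatrix n π *ᵥ ltIndicator n t = ltIndicator n (permExt n π t) := by
  ext i
  simp only [Matrix.mulVec, dotProduct, permMatrix_apply]
  refine (Fin.sum_sub_mul_ite_lt (fun m => ltIndicator n (permExt n π m) i) ht).trans ?_
  simp [permExt_zero, ltIndicator]

lemma permMatrix_inv_mul (n : ℕ) (π : Equiv.Perm (Fin n)) :
    permMatrix n π⁻¹ * permMatrix n π = 1 := by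
  ext i k
  have hcol : (fun j => permMatrix n π j k) =
      ltIndicator n (permExt n π (k + 1)) - ltIndicator n (permExt n π k) := by
    ext j; exact permMatrix_apply n π j k
  calc (permMatrix n π⁻¹ * permMatrix n π) i k
      = (permMatrix n π⁻¹ *ᵥ fun j => permMatrix n π j k) i := rfl
    _ = ltIndicator n (k + 1) i - ltIndicator n k i := by
      rw [hcol, Matrix.mulVec_sub, permMatrix_mulVec_ltIndicator n π⁻¹ (permExt_le n π (by omega)),
        permMatrix_mulVec_ltIndicator n π⁻¹ (permExt_le n π (by omega)),
        permExt_inv_permExt, permExt_inv_permExt]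
      rfl
    _ = (1 : Matrix (Fin (n + 1)) (Fin (n + 1)) ℤ) i k := by
      simp only [ltIndicator, Matrix.one_apply, Fin.ext_iff]
      split_ifs <;> omega

/-- Inversion of the permutation matrices: `M(π⁻¹) = M(π)⁻¹`. -/
theorem permMatrix_inv (n : ℕ) (π : Equiv.Perm (Fin n)) :
    permMatrix n π⁻¹ = (permMatrix n π)⁻¹ :=
  (Matrix.inv_eq_left_inv (permMatrix_inv_mul n π)).symm
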